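/- Let \lambda be a partition of n with largest hook length L and let b be the multiplicity of its largest part. Define l = L - b + 1 if \lambda is not rectangular or b = 1, and l = L - b + 2 if \lambda is rectangular with b > 1. Then for every integer k with l <= k <= L and \lambda \neq (n), the partition \lambda is k-restricted. -/
import Mathlib


/-- `f` represents a partition of `n`: a weakly decreasing sequence of naturals
(`f i` being the `(i+1)`-st part), supported in degrees `< n`, with total sum `n`. -/
def IsPartitionOf (n : ℕ) (f : ℕ → ℕ) : Prop :=
  (∀ i j : ℕ, i ≤ j → f j ≤ f i) ∧ (∀ i : ℕ, n ≤ i → f i = 0) ∧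
    (∑ i ∈ Finset.range n, f i) = n

/-- The length `L = λ₁ + λ₁^∨ - 1` of the largest hook of a partition
(`λ₁^∨` being the number of nonzero parts). -/
def largestHookLen (n : ℕ) (f : ℕ → ℕ) : ℕ :=
  f 0 + ((Finset.range n).filter fun i => f i ≠ 0).card - 1

/-- The multiplicity `b` of the largest part of a partition. -/
def multTop (n : ℕ) (f : ℕ → ℕ) : ℕ :=
  ((Finset.range n).filter fun i => f i = f 0).card

/-- A partition is rectangular if all its nonzero parts are equal. -/
def IsRectangular (n : ℕ) (f : ℕ → ℕ) : Prop :=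
  ∀ i < n, f i = 0 ∨ f i = f 0

open Classical in
/-- The smallest main hook `l` of a partition: `l = L - b + 2` if the partition is
rectangular with `b > 1`, and `l = L - b + 1` otherwise.  The main hooks are the
integers `k` with `l ≤ k ≤ L`. -/
noncomputable def smallestMainHook (n : ℕ) (f : ℕ → ℕ) : ℕ :=
  if IsRectangular n f ∧ 1 < multTop n f then largestHookLen n f - multTop n f + 2
  else largestHookLen n f - multTop n f + 1

/-- The conjugate (transposed) partition: `λ^∨_{j+1} = #{i : λ_i ≥ j+1}`. -/
def conjPart (n : ℕ) (f : ℕ → ℕ) : ℕ → ℕ :=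
  fun j => ((Finset.range n).filter fun i => j + 1 ≤ f i).card

/-- A partition is `e`-restricted if consecutive parts differ by less than `e`. -/
def IsRestricted (e : ℕ) (f : ℕ → ℕ) : Prop :=
  ∀ i : ℕ, f i < f (i + 1) + e

/-- Let `λ` be a partition of `n` with largest hook length `L`, multiplicity `b` of
the largest part, and smallest main hook `l` (`l = L - b + 2` if `λ` is rectangular
with `b > 1`, and `l = L - b + 1` otherwise).  If `λ ≠ (n)` then `λ` is `k`-restricted
for every main hook `k`, i.e. every integer `k` with `l ≤ k ≤ L`. -/
theorem stmt9 {n : ℕ} (f : ℕ → ℕ) (hf : IsPartitionOf n f)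
    (hrow : f ≠ fun i => if i = 0 then n else 0) (k : ℕ)
    (hlk : smallestMainHook n f ≤ k) (hkL : k ≤ largestHookLen n f) :
    IsRestricted k f := by
  classical
  obtain ⟨hmono, hzero, hsum⟩ := hf
  rcases Nat.eq_zero_or_pos n with hn | hn
  · exfalso; apply hrow; funext i
    rw [hzero i (hn ▸ Nat.zero_le i)]
    simp [hn]
  have hf0 : 1 ≤ f 0 := by
    by_contra h
    have h0 : f 0 = 0 := by omega
    have : (∑ i ∈ Finset.range n, f i) = 0 := by
      apply Finset.sum_eq_zero
      intro i _
      have := hmono 0 i (Nat.zero_le i)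
      omega
    omega
  set S := (Finset.range n).filter (fun i => f i ≠ 0) with hS
  set T := (Finset.range n).filter (fun i => f i = f 0) with hT
  have hTS : T ⊆ S := by
    intro i hi
    simp only [hS, hT, Finset.mem_filter] at *
    exact ⟨hi.1, by omega⟩
  have h0T : (0 : ℕ) ∈ T := by
    exact Finset.mem_filter.mpr ⟨Finset.mem_range.mpr hn, rfl⟩
  have hb1 : 1 ≤ T.card := Finset.card_pos.mpr ⟨0, h0T⟩
  have hbr : T.card ≤ S.card := Finset.card_le_card hTS
  have hLdef : largestHookLen n f = f 0 + S.card - 1 := rfl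
  have hbdef : multTop n f = T.card := rfl
  -- key claim: f 0 < k
  have key : f 0 < k := by
    have hrectST : IsRectangular n f → S = T := by
      intro hrect
      apply Finset.Subset.antisymm _ hTS
      intro i hi
      simp only [hS, hT, Finset.mem_filter, Finset.mem_range] at *
      rcases hrect i hi.1 with h | h
      · exact absurd h hi.2
      · exact ⟨hi.1, h⟩
    unfold smallestMainHook at hlk
    split_ifs at hlk with hcond
    · have hST : S = T := hrectST hcond.1
      rw [hLdef, hbdef, hST] at hlk
      omega
    · by_cases hrect : IsRectangular n f
      · -- then T.card = 1, S = T = {0}, so f = (n)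
        have hbeq : T.card = 1 := by
          rcases not_and_or.mp hcond with h | h
          · exact absurd hrect h
          · omega
        have hST : S = T := hrectST hrect
        exfalso
        apply hrow
        have hzero' : ∀ i, i ≠ 0 → f i = 0 := by
          intro i hi
          by_cases hin : i < n
          · by_contra hfi
            have hiS : i ∈ S := by
              simp only [hS, Finset.mem_filter, Finset.mem_range]
              exact ⟨hin, hfi⟩
            have := Finset.card_le_one.mp (by rw [hST, hbeq]) i hiS 0 (hST ▸ h0T)
            exact hi this
          · exact hzero i (by omega)
        have hf0n : f 0 = n := by
          rw [← hsum]
          rw [Finset.sum_eq_single_of_mem 0 (Finset.mem_range.mpr hn)]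
          intro i _ hi
          exact hzero' i hi
        funext i
        by_cases hi : i = 0
        · simp [hi, hf0n]
        · simp [hi, hzero' i hi]
      · -- not rectangular: T.card < S.card
        have hlt : T.card < S.card := by
          rcases lt_or_eq_of_le hbr with h | h
          · exact h
          · exfalso
            apply hrect
            intro i hi
            by_cases hfi : f i = 0
            · exact Or.inl hfi
            · right
              have hiS : i ∈ S := by
                simp only [hS, Finset.mem_filter, Finset.mem_range]
                exact ⟨hi, hfi⟩
              have hSeqT : S = T :=
                (Finset.eq_of_subset_of_card_le hTS h.ge).symm
              have : i ∈ T := hSeqT ▸ hiS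
              exact (Finset.mem_filter.mp this).2
        rw [hLdef, hbdef] at hlk
        omega
  intro i
  have := hmono 0 i (Nat.zero_le i)
  omega
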